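/- Let μ be a probability measure and f ∈ L^p(μ) with ‖f‖₂ > 0, for p > 2. Then the entropy satisfies ∫ (f/‖f‖₂)² log((f/‖f‖₂)²) dμ ≤ (p/(p−2)) · log(‖f‖_p² / ‖f‖₂²), where ‖·‖_q denotes the L^q(μ) norm. -/

import Mathlib

/-!
Put `w = f² / ‖f‖₂²`, a probability density, and `r = p / 2`. Jensen's inequality for the concave
`log` with respect to `w • μ`, applied to `w ^ (r - 1)`, gives
`(r - 1) ∫ w log w ≤ log ∫ w ^ r = log (‖f‖ₚᵖ / ‖f‖₂ᵖ)`.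
Jensen is used in its tangent-line form `log y ≤ y / c - 1 + log c` with `c = ∫ w ^ r`, which
integrates against `w • μ` to exactly `log c`.
-/

open MeasureTheory Real

lemma sub_one_mul_mul_log_le {w r c : ℝ} (hw : 0 ≤ w) (hr : 1 < r) (hc : 0 < c) :
    (r - 1) * (w * log w) ≤ w ^ r / c - w + w * log c := by
  rcases hw.eq_or_lt with rfl | hw
  · simp [zero_rpow (by linarith : r ≠ 0)]
  have tangent := log_le_sub_one_of_pos (div_pos (rpow_pos_of_pos hw (r - 1)) hc)
  rw [log_div (rpow_pos_of_pos hw _).ne' hc.ne', log_rpow hw, rpow_sub_one hw.ne'] at tangent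
  have := mul_le_mul_of_nonneg_left tangent hw.le
  field_simp at this ⊢
  linarith

section Density

variable {α : Type*} [MeasurableSpace α] {μ : Measure α} {w : α → ℝ} {r : ℝ}

lemma integral_rpow_pos_of_integral_pos (hw : 0 ≤ w) (hwi : Integrable w μ)
    (hwr : Integrable (fun x ↦ w x ^ r) μ) (hr : r ≠ 0) (h : 0 < ∫ x, w x ∂μ) :
    0 < ∫ x, w x ^ r ∂μ := by
  have hsupp : Function.support (fun x ↦ w x ^ r) = Function.support w := by
    ext x
    simp [rpow_eq_zero (hw x) hr]
  rw [integral_pos_iff_support_of_nonneg (fun x ↦ rpow_nonneg (hw x) r) hwr, hsupp,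
    ← integral_pos_iff_support_of_nonneg hw hwi]
  exact h

lemma sub_one_mul_integral_mul_log_le_log_integral_rpow [IsFiniteMeasure μ]
    (hw : 0 ≤ w) (hwm : AEStronglyMeasurable w μ) (hwi : ∫ x, w x ∂μ = 1)
    (hwr : Integrable (fun x ↦ w x ^ r) μ) (hr : 1 < r) :
    (r - 1) * ∫ x, w x * log (w x) ∂μ ≤ log (∫ x, w x ^ r ∂μ) := by
  have hwint : Integrable w μ := by
    by_contra h
    simp [integral_undef h] at hwi
  set c := ∫ x, w x ^ r ∂μ
  have hc : 0 < c :=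
    integral_rpow_pos_of_integral_pos hw hwint hwr (by linarith) (by rw [hwi]; exact one_pos)
  have hbound (x : α) := sub_one_mul_mul_log_le (hw x) hr hc
  have hdiff : Integrable (fun x ↦ w x ^ r / c - w x) μ := (hwr.div_const c).sub hwint
  have hupper : Integrable (fun x ↦ w x ^ r / c - w x + w x * log c) μ :=
    hdiff.add (hwint.mul_const _)
  have hmul_log : Integrable (fun x ↦ w x * log (w x)) μ := by
    refine integrable_of_le_of_le (continuous_mul_log.comp_aestronglyMeasurable hwm)
      (Filter.Eventually.of_forall fun x ↦ self_sub_one_le_mul_log (hw x))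
      (Filter.Eventually.of_forall fun x ↦ ?_) (hwint.sub (integrable_const 1))
      (hupper.div_const (r - 1))
    rw [le_div_iff₀ (by linarith), mul_comm]
    exact hbound x
  calc (r - 1) * ∫ x, w x * log (w x) ∂μ
      = ∫ x, (r - 1) * (w x * log (w x)) ∂μ := (integral_const_mul _ _).symm
    _ ≤ ∫ x, (w x ^ r / c - w x + w x * log c) ∂μ :=
        integral_mono (hmul_log.const_mul _) hupper hbound
    _ = log c := by
        rw [integral_add hdiff (hwint.mul_const _),
          integral_sub (hwr.div_const c) hwint, integral_div, integral_mul_const, hwi,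
          div_self hc.ne']
        ring

end Density

lemma sq_rpow_half_eq_abs_rpow (t p : ℝ) : (t ^ 2) ^ (p / 2) = |t| ^ p := by
  rw [← sq_abs, ← rpow_natCast, ← rpow_mul (abs_nonneg t)]
  ring_nf

theorem stmt_7 {α : Type*} [MeasurableSpace α]
    (μ : Measure α) [IsProbabilityMeasure μ]
    (p : ℝ) (hp : 2 < p) (f : α → ℝ)
    (hf : MemLp f (ENNReal.ofReal p) μ)
    (h2 : 0 < ∫ x, (f x) ^ 2 ∂μ) :
    ∫ x, (f x) ^ 2 / (∫ y, (f y) ^ 2 ∂μ) *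
        Real.log ((f x) ^ 2 / (∫ y, (f y) ^ 2 ∂μ)) ∂μ ≤
      p / (p - 2) *
        Real.log ((∫ x, |f x| ^ p ∂μ) ^ (2 / p) / (∫ x, (f x) ^ 2 ∂μ)) := by
  set N := ∫ x, (f x) ^ 2 ∂μ
  set A := ∫ x, |f x| ^ p ∂μ
  have hp0 : 0 < p := by linarith
  have hsq : Integrable (fun x ↦ f x ^ 2) μ :=
    (hf.mono_exponent (by simpa using ENNReal.ofReal_le_ofReal hp.le)).integrable_sq
  have habs : Integrable (fun x ↦ (f x ^ 2) ^ (p / 2)) μ := by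
    simpa [sq_rpow_half_eq_abs_rpow, ENNReal.toReal_ofReal hp0.le] using
      hf.integrable_norm_rpow (by simp [hp0]) ENNReal.ofReal_ne_top
  have hA : 0 < A := by
    simpa [sq_rpow_half_eq_abs_rpow] using
      integral_rpow_pos_of_integral_pos (fun x ↦ sq_nonneg (f x)) hsq habs (by positivity) h2
  have hjensen := sub_one_mul_integral_mul_log_le_log_integral_rpow (μ := μ) (r := p / 2)
    (w := fun x ↦ f x ^ 2 / N) (fun x ↦ by positivity)
    (hsq.div_const N).aestronglyMeasurable (by rw [integral_div, div_self h2.ne'])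
    (by simpa only [div_rpow (sq_nonneg _) h2.le] using habs.div_const (N ^ (p / 2)))
    (by linarith)
  have hrhs : log (∫ x, (f x ^ 2 / N) ^ (p / 2) ∂μ) = p / 2 * log (A ^ (2 / p) / N) := by
    simp only [div_rpow (sq_nonneg _) h2.le, sq_rpow_half_eq_abs_rpow, integral_div]
    rw [log_div hA.ne' (rpow_pos_of_pos h2 _).ne', log_div (rpow_pos_of_pos hA _).ne' h2.ne',
      log_rpow h2, log_rpow hA]
    field_simp
  rw [hrhs] at hjensen
  rw [div_mul_eq_mul_div, le_div_iff₀ (by linarith)]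
  linarith
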